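/- (Double-integral oscillation bound, d = 2, 0 < p ≤ 1.) Let 0 < p ≤ 1, Q = [a₁,b₁] × [a₂,b₂], and δ(Q) = (δ₁,δ₂) = (b₁−a₁, b₂−a₂). Then for every f ∈ L_p(Q): ∫_Q ∫_Q |f(x) − f(y)|^p dx dy ≤ 2 δ₁ δ₂ [ ω_{(1,0)}(f, δ(Q))_{p,Q}^p + ω_{(0,1)}(f, δ(Q))_{p,Q}^p ]. -/

import Mathlib

open MeasureTheory ENNReal NNReal Finset

/-- The mixed `r`-th difference operator `Δ_h^r` applied to `f` at `x`. -/
noncomputable def mixedDiff {d : ℕ} (r : Fin d → ℕ) (h : Fin d → ℝ)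
    (f : (Fin d → ℝ) → ℝ) (x : Fin d → ℝ) : ℝ :=
  ∑ j : (i : Fin d) → Fin (r i + 1),
    (∏ i, (-1 : ℝ) ^ (r i - (j i : ℕ)) * ((r i).choose (j i) : ℝ)) *
      f (fun i => x i + (j i : ℝ) * h i)

/-- The `d`-parallelepiped `Q = ∏ [a_i, b_i]`. -/
def box {d : ℕ} (a b : Fin d → ℝ) : Set (Fin d → ℝ) :=
  Set.univ.pi fun i => Set.Icc (a i) (b i)

/-- `Q_y = {x ∈ Q : x_i, x_i + y_i ∈ [a_i,b_i] ∀ i}`. -/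
def boxShift {d : ℕ} (a b : Fin d → ℝ) (y : Fin d → ℝ) : Set (Fin d → ℝ) :=
  {x | ∀ i, x i ∈ Set.Icc (a i) (b i) ∧ x i + y i ∈ Set.Icc (a i) (b i)}

/-- The `L_p` quasi-norm of `f` on a set `S` (essential supremum for `p = ∞`). -/
noncomputable def pNorm {d : ℕ} (p : ℝ≥0∞) (f : (Fin d → ℝ) → ℝ)
    (S : Set (Fin d → ℝ)) : ℝ≥0∞ :=
  eLpNorm f p (volume.restrict S)

/-- The mixed `r`-th modulus of smoothness `ω_r(f,t)_{p,Q}`. -/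
noncomputable def modulus {d : ℕ} (p : ℝ≥0∞) (r : Fin d → ℕ) (f : (Fin d → ℝ) → ℝ)
    (a b : Fin d → ℝ) (t : Fin d → ℝ) : ℝ≥0∞ :=
  ⨆ h ∈ {h : Fin d → ℝ | ∀ i, |h i| ≤ t i},
    pNorm p (mixedDiff r h f) (boxShift a b fun i => (r i : ℝ) * h i)

/-- `r(e)` : the vector with coordinates `r_i` on `e` and `0` off `e`. -/
def restrictOrder {d : ℕ} (r : Fin d → ℕ) (e : Finset (Fin d)) : Fin d → ℕ :=
  fun i => if i ∈ e then r i else 0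

/-- The total mixed modulus of smoothness `Ω_r(f,t)_{p,Q}`. -/
noncomputable def totalModulus {d : ℕ} (p : ℝ≥0∞) (r : Fin d → ℕ) (f : (Fin d → ℝ) → ℝ)
    (a b : Fin d → ℝ) (t : Fin d → ℝ) : ℝ≥0∞ :=
  ∑ e ∈ Finset.univ.powerset.erase ∅, modulus p (restrictOrder r e) f a b t

/-- `φ ∈ 𝒫_r` : `φ` is a polynomial of degree at most `r_i - 1` in the variable `x_i`. -/
def IsPolyDeg {d : ℕ} (r : Fin d → ℕ) (φ : (Fin d → ℝ) → ℝ) : Prop :=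
  ∃ P : MvPolynomial (Fin d) ℝ, (∀ i, P.degreeOf i < r i) ∧ ∀ x, φ x = MvPolynomial.eval x P

/-- The error `E_r(f)_{p,Q}` of best approximation by polynomials from `𝒫_r`. -/
noncomputable def bestApprox {d : ℕ} (p : ℝ≥0∞) (r : Fin d → ℕ) (f : (Fin d → ℝ) → ℝ)
    (a b : Fin d → ℝ) : ℝ≥0∞ :=
  ⨅ φ ∈ {φ : (Fin d → ℝ) → ℝ | IsPolyDeg r φ}, pNorm p (fun x => f x - φ x) (box a b)


/-!
Route from `x` to `y` through the corner `z = (y₁, x₂)`, which lies in `Q`. Since `p ≤ 1`,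
`|f x - f y|^p ≤ |f x - f z|^p + |f z - f y|^p`, and each term moves a single coordinate.
In the first one `y₂` integrates out to the factor `δ₂`; substituting `y₁ = x₁ + h` and
exchanging the integrals turns what is left into `∫_{|h| ≤ δ₁} ‖Δ_{(h,0)} f‖_{p,Q_{(h,0)}}^p dh`,
which is at most `2 δ₁ ω_{(1,0)}^p`. The second term is the same with the roles of `x` and `y`
and of the coordinates exchanged. Passing to a measurable representative of `f` changes neither
side, because translations preserve null sets.
-/

lemma mixedDiff_single_one {d : ℕ} (i : Fin d) (h : Fin d → ℝ) (f : (Fin d → ℝ) → ℝ)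
    (x : Fin d → ℝ) : mixedDiff (Pi.single i 1) h f x = f (x + Pi.single i (h i)) - f x := by
  classical
  set r : Fin d → ℕ := Pi.single i 1 with hr
  have hr_ne : ∀ k, k ≠ i → r k = 0 := fun k hk => Pi.single_eq_of_ne hk 1
  let j₀ : (k : Fin d) → Fin (r k + 1) := fun _ => 0
  let j₁ : (k : Fin d) → Fin (r k + 1) := fun k => Fin.last (r k)
  have hj : ∀ j : (k : Fin d) → Fin (r k + 1), j = j₁ ∨ j = j₀ := by
    intro j
    have hoff : ∀ k, k ≠ i → (j k : ℕ) = 0 := fun k hk => by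
      have := (j k).isLt; have := hr_ne k hk; omega
    have hi : (j i : ℕ) = 1 ∨ (j i : ℕ) = 0 := by
      have := (j i).isLt; have : r i = 1 := by simp [hr]
      omega
    rcases hi with hi | hi
    · left; funext k; ext
      by_cases hk : k = i
      · subst hk; simp [j₁, hi, hr]
      · simp [j₁, hoff k hk, hr_ne k hk]
    · right; funext k; ext
      by_cases hk : k = i
      · subst hk; simp [j₀, hi]
      · simp [j₀, hoff k hk]
  have hne : j₁ ≠ j₀ := fun heq => by
    have := congrArg Fin.val (congrFun heq i); simp [j₁, j₀, hr] at this
  rw [mixedDiff, Fintype.sum_eq_add j₁ j₀ hne fun j hj' => ((hj j).elim hj'.1 hj'.2).elim]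
  have hshift : (fun k => x k + ((j₁ k : ℕ) : ℝ) * h k) = x + Pi.single i (h i) := by
    funext k
    by_cases hk : k = i
    · subst hk; simp [j₁, hr]
    · simp [j₁, hr_ne k hk, hk]
  have hcoef₁ : ∏ k, (-1 : ℝ) ^ (r k - (j₁ k : ℕ)) * ((r k).choose (j₁ k) : ℝ) = 1 :=
    Finset.prod_eq_one fun k _ => by simp [j₁]
  have hcoef₀ : ∏ k, (-1 : ℝ) ^ (r k - (j₀ k : ℕ)) * ((r k).choose (j₀ k) : ℝ) = -1 := by
    rw [Finset.prod_eq_single i (fun k _ hk => by simp [j₀, hr_ne k hk]) (by simp)]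
    simp [j₀, hr]
  rw [hshift, hcoef₁, hcoef₀]
  simp [j₀]
  ring

lemma enorm_sub_rpow_le_add {E : Type*} [SeminormedAddCommGroup E] {p : ℝ} (hp0 : 0 ≤ p)
    (hp1 : p ≤ 1) (u v w : E) : ‖u - w‖ₑ ^ p ≤ ‖u - v‖ₑ ^ p + ‖v - w‖ₑ ^ p := by
  simp only [← edist_eq_enorm_sub]
  exact (ENNReal.rpow_le_rpow (edist_triangle u v w) hp0).trans
    (ENNReal.rpow_add_le_add_rpow _ _ hp0 hp1)

lemma eLpNorm_ofReal_rpow {α : Type*} [MeasurableSpace α] {μ : Measure α} {p : ℝ} (hp : 0 < p)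
    (F : α → ℝ) : eLpNorm F (ENNReal.ofReal p) μ ^ p = ∫⁻ x, ‖F x‖ₑ ^ p ∂μ := by
  have := eLpNorm_nnreal_pow_eq_lintegral (μ := μ) (f := F) (p := p.toNNReal) (by simpa using hp)
  rwa [Real.coe_toNNReal _ hp.le] at this

@[fun_prop]
lemma Measurable.update {δ α : Type*} [DecidableEq δ] {X : δ → Type*}
    [∀ k, MeasurableSpace (X k)] [MeasurableSpace α] {u : α → ∀ k, X k} {i : δ} {v : α → X i}
    (hu : Measurable u) (hv : Measurable v) : Measurable fun z => Function.update (u z) i (v z) :=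
  measurable_update'.comp (hu.prodMk hv)

section Box

variable {d : ℕ} {a b : Fin d → ℝ}

lemma measurableSet_box : MeasurableSet (box a b) :=
  MeasurableSet.univ_pi fun _ => measurableSet_Icc

lemma volume_box : volume (box a b) = ∏ k, ENNReal.ofReal (b k - a k) := by
  rw [_root_.box, Set.pi_univ_Icc, Real.volume_Icc_pi]

lemma boxShift_eq_inter (y : Fin d → ℝ) : boxShift a b y = box a b ∩ (· + y) ⁻¹' box a b := by
  ext x
  simp only [boxShift, _root_.box, Set.mem_inter_iff, Set.mem_preimage, Set.mem_pi, Set.mem_univ,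
    true_implies, Set.mem_ofPred_eq, Pi.add_apply, forall_and]

lemma measurableSet_boxShift (y : Fin d → ℝ) : MeasurableSet (boxShift a b y) := by
  rw [boxShift_eq_inter]
  exact measurableSet_box.inter (measurableSet_box.preimage (measurable_add_const y))

lemma mem_boxShift_single {i : Fin d} {s : ℝ} {x : Fin d → ℝ} :
    x ∈ boxShift a b (Pi.single i s) ↔ x ∈ box a b ∧ x i + s ∈ Set.Icc (a i) (b i) := by
  classical
  refine ⟨fun hx => ⟨fun k _ => (hx k).1, by simpa using (hx i).2⟩, fun ⟨hx, hs⟩ k => ?_⟩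
  by_cases hk : k = i
  · subst hk; simpa using ⟨hx k trivial, hs⟩
  · simpa [hk] using hx k trivial

lemma add_mem_box_of_mem_boxShift {r : Fin d → ℕ} {h x : Fin d → ℝ}
    (hx : x ∈ boxShift a b fun k => (r k : ℝ) * h k) (j : (k : Fin d) → Fin (r k + 1)) :
    x + (fun k => (j k : ℝ) * h k) ∈ box a b := by
  intro k _
  obtain ⟨⟨h₁, h₂⟩, h₃, h₄⟩ := hx k
  have hj₀ : (0 : ℝ) ≤ j k := Nat.cast_nonneg _
  have hjr : (j k : ℝ) ≤ r k := by exact_mod_cast Nat.lt_succ_iff.1 (j k).isLt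
  simp only [Pi.add_apply, Set.mem_Icc]
  rcases le_total 0 (h k) with hh | hh <;> constructor <;> nlinarith

lemma modulus_congr_ae {p : ℝ≥0∞} {r : Fin d → ℕ} {f g : (Fin d → ℝ) → ℝ} {t : Fin d → ℝ}
    (hfg : f =ᵐ[volume.restrict (box a b)] g) : modulus p r f a b t = modulus p r g a b t := by
  have hshift : ∀ c : Fin d → ℝ, ∀ᵐ x ∂(volume : Measure (Fin d → ℝ)),
      x + c ∈ box a b → f (x + c) = g (x + c) := fun c =>
    (measurePreserving_add_right volume c).quasiMeasurePreserving.ae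
      ((ae_restrict_iff' measurableSet_box).1 hfg)
  unfold modulus pNorm
  refine iSup_congr fun h => iSup_congr fun _ => eLpNorm_congr_ae ?_
  rw [Filter.EventuallyEq, ae_restrict_iff' (measurableSet_boxShift _)]
  filter_upwards [ae_all_iff.2 fun j : (k : Fin d) → Fin (r k + 1) =>
    hshift fun k => (j k : ℝ) * h k] with x hx hxQ
  exact Finset.sum_congr rfl fun j _ =>
    congrArg _ (hx j (add_mem_box_of_mem_boxShift hxQ j))

lemma pNorm_sub_shift_single_le_modulus {p : ℝ≥0∞} {i : Fin d} {f : (Fin d → ℝ) → ℝ}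
    {t : Fin d → ℝ} (ht : ∀ k, 0 ≤ t k) {s : ℝ} (hs : |s| ≤ t i) :
    pNorm p (fun x => f (x + Pi.single i s) - f x) (boxShift a b (Pi.single i s)) ≤
      modulus p (Pi.single i 1) f a b t := by
  classical
  have hmem : ∀ k, |(Pi.single i s : Fin d → ℝ) k| ≤ t k := fun k => by
    by_cases hk : k = i
    · subst hk; simpa using hs
    · simpa [hk] using ht k
  have hdiff : mixedDiff (Pi.single i 1) (Pi.single i s) f = fun x => f (x + Pi.single i s) - f x :=
    funext fun x => by rw [mixedDiff_single_one, Pi.single_eq_same]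
  have hshift : (fun k => ((Pi.single i 1 : Fin d → ℕ) k : ℝ) * (Pi.single i s : Fin d → ℝ) k) =
      Pi.single i s := by
    funext k
    by_cases hk : k = i
    · subst hk; simp
    · simp [hk]
  have := le_iSup₂ (f := fun h (_ : h ∈ {h : Fin d → ℝ | ∀ k, |h k| ≤ t k}) =>
    pNorm p (mixedDiff (Pi.single i 1) h f)
      (boxShift a b fun k => ((Pi.single i 1 : Fin d → ℕ) k : ℝ) * h k)) (Pi.single i s) hmem
  rwa [hdiff, hshift] at this

lemma lintegral_box_comp_eval (i : Fin d) {G : ℝ → ℝ≥0∞} (hG : Measurable G) :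
    ∫⁻ y in box a b, G (y i) =
      (∏ k ∈ univ.erase i, ENNReal.ofReal (b k - a k)) * ∫⁻ s in Set.Icc (a i) (b i), G s := by
  classical
  rw [_root_.box, volume_pi, Measure.restrict_pi_pi, ← lintegral_map hG (measurable_pi_apply i),
    Measure.pi_map_eval, lintegral_smul_measure]
  simp [Real.volume_Icc]

lemma lintegral_box_indicator_update_eq {p : ℝ} (hp : 0 < p) (f : (Fin d → ℝ) → ℝ) (i : Fin d)
    (s : ℝ) :
    ∫⁻ x in box a b, (Set.Icc (a i) (b i)).indicator
        (fun t => ‖f (Function.update x i t) - f x‖ₑ ^ p) (x i + s) =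
      pNorm (ENNReal.ofReal p) (fun x => f (x + Pi.single i s) - f x)
        (boxShift a b (Pi.single i s)) ^ p := by
  classical
  have hupdate : ∀ x : Fin d → ℝ, Function.update x i (x i + s) = x + Pi.single i s := fun x => by
    funext k
    by_cases hk : k = i
    · subst hk; simp
    · simp [hk]
  rw [pNorm, eLpNorm_ofReal_rpow hp, ← lintegral_indicator measurableSet_box,
    ← lintegral_indicator (measurableSet_boxShift _)]
  refine lintegral_congr fun x => ?_
  by_cases hx : x ∈ box a b <;> by_cases hxs : x i + s ∈ Set.Icc (a i) (b i) <;>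
    simp [Set.indicator, hx, hxs, mem_boxShift_single, hupdate, enorm_sub_rev]

lemma pNorm_sub_shift_single_rpow_le_indicator {p : ℝ} (hp : 0 < p) (hab : ∀ k, a k ≤ b k)
    (f : (Fin d → ℝ) → ℝ) (i : Fin d) (s : ℝ) :
    pNorm (ENNReal.ofReal p) (fun x => f (x + Pi.single i s) - f x)
        (boxShift a b (Pi.single i s)) ^ p ≤
      (Set.Icc (-(b i - a i)) (b i - a i)).indicator
        (fun _ => modulus (ENNReal.ofReal p) (Pi.single i 1) f a b (fun k => b k - a k) ^ p) s := by
  by_cases hs : |s| ≤ b i - a i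
  · rw [Set.indicator_of_mem (Set.mem_Icc.2 (abs_le.1 hs))]
    exact ENNReal.rpow_le_rpow
      (pNorm_sub_shift_single_le_modulus (fun k => sub_nonneg.2 (hab k)) hs) hp.le
  · have hempty : boxShift a b (Pi.single i s) = ∅ := by
      refine Set.eq_empty_of_forall_notMem fun x hx => hs ?_
      obtain ⟨hx, hxs⟩ := mem_boxShift_single.1 hx
      obtain ⟨hxi₁, hxi₂⟩ := hx i trivial
      exact abs_le.2 ⟨by linarith [hxs.1], by linarith [hxs.2]⟩
    simp [pNorm, hempty, ENNReal.zero_rpow_of_pos hp]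

lemma lintegral_box_lintegral_Icc_update_le {p : ℝ} (hp : 0 < p) (hab : ∀ k, a k ≤ b k)
    {f : (Fin d → ℝ) → ℝ} (hf : Measurable f) (i : Fin d) :
    ∫⁻ x in box a b, ∫⁻ s in Set.Icc (a i) (b i), ‖f (Function.update x i s) - f x‖ₑ ^ p ≤
      2 * ENNReal.ofReal (b i - a i) *
        modulus (ENNReal.ofReal p) (Pi.single i 1) f a b (fun k => b k - a k) ^ p := by
  classical
  set I := Set.Icc (a i) (b i)
  set δ := b i - a i
  set ω := modulus (ENNReal.ofReal p) (Pi.single i 1) f a b (fun k => b k - a k)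
  set F : (Fin d → ℝ) → ℝ → ℝ≥0∞ := fun x t => ‖f (Function.update x i t) - f x‖ₑ ^ p
  have hF : Measurable fun z : (Fin d → ℝ) × ℝ => I.indicator (F z.1) (z.1 i + z.2) := by
    simp only [Set.indicator]
    exact Measurable.ite (measurableSet_Icc.preimage (by fun_prop)) (by fun_prop) measurable_const
  calc ∫⁻ x in box a b, ∫⁻ t in I, F x t
      = ∫⁻ x in box a b, ∫⁻ s, I.indicator (F x) (x i + s) := by
        refine lintegral_congr fun x => ?_
        rw [← lintegral_indicator measurableSet_Icc, lintegral_add_left_eq_self (I.indicator (F x))]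
    _ = ∫⁻ s, ∫⁻ x in box a b, I.indicator (F x) (x i + s) :=
        lintegral_lintegral_swap hF.aemeasurable
    _ ≤ ∫⁻ s, (Set.Icc (-δ) δ).indicator (fun _ => ω ^ p) s := lintegral_mono fun s => by
        rw [lintegral_box_indicator_update_eq hp]
        exact pNorm_sub_shift_single_rpow_le_indicator hp hab f i s
    _ = 2 * ENNReal.ofReal δ * ω ^ p := by
        rw [lintegral_indicator_const measurableSet_Icc, Real.volume_Icc, sub_neg_eq_add,
          ← two_mul, ENNReal.ofReal_mul zero_le_two, ENNReal.ofReal_ofNat]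
        ring

lemma lintegral_box_box_update_le {p : ℝ} (hp : 0 < p) (hab : ∀ k, a k ≤ b k)
    {f : (Fin d → ℝ) → ℝ} (hf : Measurable f) (i : Fin d) :
    ∫⁻ x in box a b, ∫⁻ y in box a b, ‖f (Function.update x i (y i)) - f x‖ₑ ^ p ≤
      2 * volume (box a b) *
        modulus (ENNReal.ofReal p) (Pi.single i 1) f a b (fun k => b k - a k) ^ p := by
  classical
  have hmeas : Measurable fun z : (Fin d → ℝ) × ℝ =>
      ‖f (Function.update z.1 i z.2) - f z.1‖ₑ ^ p := by
    fun_prop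
  calc ∫⁻ x in box a b, ∫⁻ y in box a b, ‖f (Function.update x i (y i)) - f x‖ₑ ^ p
      = ∫⁻ x in box a b, (∏ k ∈ univ.erase i, ENNReal.ofReal (b k - a k)) *
          ∫⁻ s in Set.Icc (a i) (b i), ‖f (Function.update x i s) - f x‖ₑ ^ p :=
        lintegral_congr fun x =>
          lintegral_box_comp_eval i (hmeas.comp (measurable_const.prodMk measurable_id))
    _ = (∏ k ∈ univ.erase i, ENNReal.ofReal (b k - a k)) *
          ∫⁻ x in box a b, ∫⁻ s in Set.Icc (a i) (b i), ‖f (Function.update x i s) - f x‖ₑ ^ p :=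
        lintegral_const_mul _ hmeas.lintegral_prod_right'
    _ ≤ (∏ k ∈ univ.erase i, ENNReal.ofReal (b k - a k)) * (2 * ENNReal.ofReal (b i - a i) *
          modulus (ENNReal.ofReal p) (Pi.single i 1) f a b (fun k => b k - a k) ^ p) := by
        gcongr
        exact lintegral_box_lintegral_Icc_update_le hp hab hf i
    _ = _ := by
        rw [volume_box, ← Finset.prod_erase_mul _ _ (mem_univ i)]
        ring

end Box

theorem lintegral_box_box_enorm_sub_rpow_le {p : ℝ} (hp0 : 0 < p) (hp1 : p ≤ 1)
    {a b : Fin 2 → ℝ} (hab : ∀ i, a i ≤ b i) {f : (Fin 2 → ℝ) → ℝ} (hf : Measurable f) :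
    ∫⁻ x in box a b, ∫⁻ y in box a b, ‖f x - f y‖ₑ ^ p ≤
      2 * volume (box a b) *
        (modulus (ENNReal.ofReal p) (Pi.single 0 1) f a b (fun k => b k - a k) ^ p +
          modulus (ENNReal.ofReal p) (Pi.single 1 1) f a b (fun k => b k - a k) ^ p) := by
  have hcorner : ∀ x y : Fin 2 → ℝ, Function.update x 0 (y 0) = Function.update y 1 (x 1) :=
    fun x y => funext fun k => by fin_cases k <;> simp
  have htri : ∀ x y : Fin 2 → ℝ, ‖f x - f y‖ₑ ^ p ≤
      ‖f (Function.update x 0 (y 0)) - f x‖ₑ ^ p + ‖f (Function.update y 1 (x 1)) - f y‖ₑ ^ p :=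
    fun x y => by
      calc ‖f x - f y‖ₑ ^ p
          ≤ ‖f x - f (Function.update x 0 (y 0))‖ₑ ^ p +
              ‖f (Function.update x 0 (y 0)) - f y‖ₑ ^ p := enorm_sub_rpow_le_add hp0.le hp1 _ _ _
        _ = _ := by rw [enorm_sub_rev (f x), hcorner x y]
  have hmeas : ∀ i : Fin 2, Measurable fun z : (Fin 2 → ℝ) × (Fin 2 → ℝ) =>
      ‖f (Function.update z.1 i (z.2 i)) - f z.1‖ₑ ^ p := fun i => by
    fun_prop
  calc ∫⁻ x in box a b, ∫⁻ y in box a b, ‖f x - f y‖ₑ ^ p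
      ≤ ∫⁻ x in box a b, ∫⁻ y in box a b, (‖f (Function.update x 0 (y 0)) - f x‖ₑ ^ p +
          ‖f (Function.update y 1 (x 1)) - f y‖ₑ ^ p) :=
        lintegral_mono fun x => lintegral_mono fun y => htri x y
    _ = (∫⁻ x in box a b, ∫⁻ y in box a b, ‖f (Function.update x 0 (y 0)) - f x‖ₑ ^ p) +
          ∫⁻ x in box a b, ∫⁻ y in box a b, ‖f (Function.update y 1 (x 1)) - f y‖ₑ ^ p :=
        (lintegral_congr fun x =>
          lintegral_add_left ((hmeas 0).comp (measurable_const.prodMk measurable_id)) _).trans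
          (lintegral_add_left (hmeas 0).lintegral_prod_right' _)
    _ = (∫⁻ x in box a b, ∫⁻ y in box a b, ‖f (Function.update x 0 (y 0)) - f x‖ₑ ^ p) +
          ∫⁻ y in box a b, ∫⁻ x in box a b, ‖f (Function.update y 1 (x 1)) - f y‖ₑ ^ p := by
        have hswap : Measurable (Function.uncurry fun x y : Fin 2 → ℝ =>
            ‖f (Function.update y 1 (x 1)) - f y‖ₑ ^ p) := by
          fun_prop
        rw [lintegral_lintegral_swap hswap.aemeasurable]
    _ ≤ 2 * volume (box a b) *
          modulus (ENNReal.ofReal p) (Pi.single 0 1) f a b (fun k => b k - a k) ^ p +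
        2 * volume (box a b) *
          modulus (ENNReal.ofReal p) (Pi.single 1 1) f a b (fun k => b k - a k) ^ p :=
      add_le_add (lintegral_box_box_update_le hp0 hab hf 0)
        (lintegral_box_box_update_le hp0 hab hf 1)
    _ = _ := (mul_add _ _ _).symm

/-- **Double-integral oscillation bound, `d = 2`, `0 < p ≤ 1`.**
For `Q = [a₁,b₁] × [a₂,b₂]` and `f ∈ L_p(Q)`,
`∫_Q ∫_Q |f(x) − f(y)|^p dx dy ≤ 2 δ₁ δ₂ [ω_{(1,0)}(f,δ(Q))_{p,Q}^p + ω_{(0,1)}(f,δ(Q))_{p,Q}^p]`. -/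
theorem double_integral_oscillation (p : ℝ) (hp0 : 0 < p) (hp1 : p ≤ 1)
    (a b : Fin 2 → ℝ) (hab : ∀ i, a i ≤ b i) (f : (Fin 2 → ℝ) → ℝ)
    (hf : MemLp f (ENNReal.ofReal p) (volume.restrict (box a b))) :
    (∫⁻ x in box a b, ∫⁻ y in box a b, ENNReal.ofReal (|f x - f y| ^ p)) ≤
      2 * ENNReal.ofReal (b 0 - a 0) * ENNReal.ofReal (b 1 - a 1) *
        ((modulus (ENNReal.ofReal p) ![1, 0] f a b (fun i => b i - a i)) ^ p +
          (modulus (ENNReal.ofReal p) ![0, 1] f a b (fun i => b i - a i)) ^ p) := by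
  obtain ⟨g, hg, hfg⟩ := hf.aestronglyMeasurable.aemeasurable
  have henorm : ∀ u : ℝ, ENNReal.ofReal (|u| ^ p) = ‖u‖ₑ ^ p := fun u => by
    rw [Real.enorm_eq_ofReal_abs, ENNReal.ofReal_rpow_of_nonneg (abs_nonneg u) hp0.le]
  have hlhs : (∫⁻ x in box a b, ∫⁻ y in box a b, ENNReal.ofReal (|f x - f y| ^ p)) =
      ∫⁻ x in box a b, ∫⁻ y in box a b, ‖g x - g y‖ₑ ^ p := by
    refine lintegral_congr_ae ?_
    filter_upwards [hfg] with x hx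
    refine lintegral_congr_ae ?_
    filter_upwards [hfg] with y hy
    rw [henorm, hx, hy]
  have hsingle : (![1, 0] : Fin 2 → ℕ) = Pi.single 0 1 ∧ (![0, 1] : Fin 2 → ℕ) = Pi.single 1 1 := by
    constructor <;> decide
  rw [hlhs, hsingle.1, hsingle.2, modulus_congr_ae hfg, modulus_congr_ae hfg, mul_assoc 2,
    ← Fin.prod_univ_two (f := fun k => ENNReal.ofReal (b k - a k)), ← volume_box]
  exact lintegral_box_box_enorm_sub_rpow_le hp0 hp1 hab hg
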